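/- arXiv:2504.17576 — 2 statements merged into one kernel-verified Lean document; each statement's English description precedes it below -/
import Mathlib

section
/- Let h > 0, c ∈ ℝ, c_h > 0, let b : ℝ → ℝ be convex, and let φ : ℝ → ℝ be non-decreasing, convex, and of linear growth. Let Z be a standard normal random variable and set Z^h := Z·1_{|Z| ≤ c_h}. Then the function (x, u) ∈ ℝ² ↦ E[φ(x + h·b(x) + √h·u·Z^h + c)] is jointly convex in (x, u). -/
open MeasureTheory ProbabilityTheory

/-- Joint convexity in `(x, u)` of the one-step truncated Euler kernel
`(x, u) ↦ E[φ(x + h b(x) + √h u Z^h + c)]`, where `Z` is standard normal,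
`Z^h = Z 1_{|Z| ≤ c_h}` is its truncation, `b` is convex, and `φ` is non-decreasing,
convex, with linear growth. -/
theorem truncated_kernel_jointly_convex
    {Ω : Type*} [MeasurableSpace Ω] (P : Measure Ω) [IsProbabilityMeasure P]
    (h : ℝ) (hh : 0 < h) (c : ℝ) (ch : ℝ) (hch : 0 < ch)
    (b : ℝ → ℝ) (hb : ConvexOn ℝ Set.univ b)
    (φ : ℝ → ℝ) (hφmono : Monotone φ) (hφconv : ConvexOn ℝ Set.univ φ)
    (hφgrowth : ∃ C > 0, ∀ x, |φ x| ≤ C * (1 + |x|))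
    (Z : Ω → ℝ) (hZmeas : Measurable Z) (hZlaw : Measure.map Z P = gaussianReal 0 1) :
    ConvexOn ℝ Set.univ (fun p : ℝ × ℝ =>
      ∫ ω, φ (p.1 + h * b p.1 + Real.sqrt h * p.2 * (if |Z ω| ≤ ch then Z ω else 0) + c) ∂P) := by
  obtain ⟨C, hC, hCb⟩ := hφgrowth
  set T : Ω → ℝ := fun ω => if |Z ω| ≤ ch then Z ω else 0 with hT
  have hTmeas : Measurable T := by
    apply Measurable.ite _ hZmeas measurable_const
    exact measurableSet_le hZmeas.abs measurable_const
  have hTbd : ∀ ω, |T ω| ≤ ch := by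
    intro ω
    by_cases hω : |Z ω| ≤ ch <;> simp [hT, hω, abs_nonneg, hch.le]
  have hs : (0:ℝ) ≤ Real.sqrt h := Real.sqrt_nonneg h
  -- integrability for every fixed (x0, u)
  have hint : ∀ x0 u : ℝ, Integrable (fun ω => φ (x0 + Real.sqrt h * u * T ω + c)) P := by
    intro x0 u
    have hmeas : Measurable (fun ω => φ (x0 + Real.sqrt h * u * T ω + c)) :=
      hφmono.measurable.comp
        (((measurable_const.add ((measurable_const.mul hTmeas))).add measurable_const))
    refine (integrable_const (C * (1 + (|x0| + Real.sqrt h * |u| * ch + |c|)))).mono'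
      hmeas.aestronglyMeasurable (ae_of_all _ fun ω => ?_)
    have h1 : |x0 + Real.sqrt h * u * T ω + c| ≤ |x0| + Real.sqrt h * |u| * ch + |c| := by
      have h2 : |x0 + Real.sqrt h * u * T ω + c| ≤ |x0| + |Real.sqrt h * u * T ω| + |c| := by
        calc |x0 + Real.sqrt h * u * T ω + c| ≤ |x0 + Real.sqrt h * u * T ω| + |c| :=
              abs_add_le _ _
          _ ≤ |x0| + |Real.sqrt h * u * T ω| + |c| := by
              have := abs_add_le x0 (Real.sqrt h * u * T ω); linarith
      have h3 : |Real.sqrt h * u * T ω| ≤ Real.sqrt h * |u| * ch := by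
        rw [abs_mul, abs_mul, abs_of_nonneg hs]
        exact mul_le_mul_of_nonneg_left (hTbd ω)
          (mul_nonneg hs (abs_nonneg u))
      linarith
    calc ‖φ (x0 + Real.sqrt h * u * T ω + c)‖
        = |φ (x0 + Real.sqrt h * u * T ω + c)| := rfl
      _ ≤ C * (1 + |x0 + Real.sqrt h * u * T ω + c|) := hCb _
      _ ≤ C * (1 + (|x0| + Real.sqrt h * |u| * ch + |c|)) := by
          apply mul_le_mul_of_nonneg_left _ hC.le
          linarith
  refine ⟨convex_univ, fun p _ q _ a a' ha ha' haa => ?_⟩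
  simp only [Prod.smul_fst, Prod.smul_snd, Prod.fst_add, Prod.snd_add, smul_eq_mul]
  -- pointwise convexity of the integrand
  have hptwise : ∀ ω,
      φ ((a * p.1 + a' * q.1) + h * b (a * p.1 + a' * q.1)
          + Real.sqrt h * (a * p.2 + a' * q.2) * T ω + c)
        ≤ a * φ (p.1 + h * b p.1 + Real.sqrt h * p.2 * T ω + c)
          + a' * φ (q.1 + h * b q.1 + Real.sqrt h * q.2 * T ω + c) := by
    intro ω
    have hbconv : b (a * p.1 + a' * q.1) ≤ a * b p.1 + a' * b q.1 := by
      have := hb.2 (Set.mem_univ p.1) (Set.mem_univ q.1) ha ha' haa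
      simpa [smul_eq_mul] using this
    have hhb : h * b (a * p.1 + a' * q.1) ≤ h * (a * b p.1 + a' * b q.1) :=
      mul_le_mul_of_nonneg_left hbconv hh.le
    have hc : a * c + a' * c = c := by rw [← add_mul, haa, one_mul]
    have harg : (a * p.1 + a' * q.1) + h * b (a * p.1 + a' * q.1)
          + Real.sqrt h * (a * p.2 + a' * q.2) * T ω + c
        ≤ a * (p.1 + h * b p.1 + Real.sqrt h * p.2 * T ω + c)
          + a' * (q.1 + h * b q.1 + Real.sqrt h * q.2 * T ω + c) := by
      nlinarith [hhb, hc]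
    calc φ ((a * p.1 + a' * q.1) + h * b (a * p.1 + a' * q.1)
          + Real.sqrt h * (a * p.2 + a' * q.2) * T ω + c)
        ≤ φ (a * (p.1 + h * b p.1 + Real.sqrt h * p.2 * T ω + c)
            + a' * (q.1 + h * b q.1 + Real.sqrt h * q.2 * T ω + c)) := hφmono harg
      _ ≤ a * φ (p.1 + h * b p.1 + Real.sqrt h * p.2 * T ω + c)
          + a' * φ (q.1 + h * b q.1 + Real.sqrt h * q.2 * T ω + c) := by
          have := hφconv.2 (Set.mem_univ (p.1 + h * b p.1 + Real.sqrt h * p.2 * T ω + c))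
            (Set.mem_univ (q.1 + h * b q.1 + Real.sqrt h * q.2 * T ω + c)) ha ha' haa
          simpa [smul_eq_mul] using this
  have i1 := hint (p.1 + h * b p.1) p.2
  have i2 := hint (q.1 + h * b q.1) q.2
  have i0 := hint ((a * p.1 + a' * q.1) + h * b (a * p.1 + a' * q.1)) (a * p.2 + a' * q.2)
  calc (∫ ω, φ ((a * p.1 + a' * q.1) + h * b (a * p.1 + a' * q.1)
          + Real.sqrt h * (a * p.2 + a' * q.2) * T ω + c) ∂P)
      ≤ ∫ ω, (a * φ (p.1 + h * b p.1 + Real.sqrt h * p.2 * T ω + c)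
          + a' * φ (q.1 + h * b q.1 + Real.sqrt h * q.2 * T ω + c)) ∂P := by
        exact integral_mono i0 ((i1.const_mul a).add (i2.const_mul a')) hptwise
    _ = a * (∫ ω, φ (p.1 + h * b p.1 + Real.sqrt h * p.2 * T ω + c) ∂P)
        + a' * (∫ ω, φ (q.1 + h * b q.1 + Real.sqrt h * q.2 * T ω + c) ∂P) := by
        rw [integral_add (i1.const_mul a) (i2.const_mul a'),
          integral_const_mul, integral_const_mul]
end

section
/- Let b, σ : ℝ → ℝ be convex and Lipschitz continuous with respective Lipschitz constants L_b ≥ 0 and L_σ > 0, with σ ≥ 0. Let h ∈ (0, min(1, 1/(2L_b))) (with the convention min(1, 1/(2L_b)) = 1 if L_b = 0), let c ∈ ℝ, let Z be a standard normal random variable, and set Z^h := Z·1_{|Z| ≤ c_{h,σ}} with truncation threshold c_{h,σ} := 1/(2√h·L_σ). Then for every non-decreasing convex function φ : ℝ → ℝ, the function x ∈ ℝ ↦ E[φ(x + h·b(x) + √h·σ(x)·Z^h + c)] is convex and non-decreasing. -/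
open MeasureTheory ProbabilityTheory Set

/-!
Write `A x = x + h b(x)` and `S x = √h σ(x)`, so that the kernel is `x ↦ E[φ(A x + S x Z^h + c)]`.

Monotonicity holds pointwise in `ω`: `h b` is `1/2`-Lipschitz because `2 L_b h < 1`, and
`√h σ(·) Z^h(ω)` is `1/2`-Lipschitz because `|Z^h| ≤ c_{h,σ}`, so `x ↦ A x + S x Z^h(ω)` is
non-decreasing.

Convexity is not pointwise, since `S x Z^h(ω)` may be concave in `x` where `Z^h(ω) < 0`. But `Z^h`
is symmetric, so the kernel is also `½ E[φ(A x + S x |Z^h|) + φ(A x - S x |Z^h|)]`, and for a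
non-decreasing convex `φ`, a convex `A` and a convex `S ≥ 0` the map
`x ↦ φ(A x + S x) + φ(A x - S x)` is convex: the pair `(A m + S m, A m - S m)` at a convex
combination `m` is dominated, in the sense of weak majorization, by the corresponding convex
combination of the pairs at the endpoints.
-/

section ConvexPairs

variable {φ : ℝ → ℝ}

theorem ConvexOn.map_add_map_le_of_add_eq (hφ : ConvexOn ℝ univ φ) {u₁ u₂ v w : ℝ}
    (hvu : v ≤ u₁) (huw : u₁ ≤ w) (hsum : u₁ + u₂ = v + w) :
    φ u₁ + φ u₂ ≤ φ v + φ w := by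
  rcases (hvu.trans huw).eq_or_lt with hvw | hvw
  · obtain rfl : u₁ = v := by linarith
    obtain rfl : u₂ = w := by linarith
    rfl
  set θ := (u₁ - v) / (w - v)
  have hθ₀ : 0 ≤ θ := div_nonneg (by linarith) (by linarith)
  have hθ₁ : θ ≤ 1 := (div_le_one (by linarith)).2 (by linarith)
  have hu₁ : (1 - θ) • v + θ • w = u₁ := by
    simp only [smul_eq_mul, θ]; field_simp; ring
  have hu₂ : θ • v + (1 - θ) • w = u₂ := by
    rw [show u₂ = v + w - u₁ by linarith, ← hu₁]; simp only [smul_eq_mul]; ring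
  have h₁ := hφ.2 (mem_univ v) (mem_univ w) (sub_nonneg.2 hθ₁) hθ₀ (sub_add_cancel 1 θ)
  have h₂ := hφ.2 (mem_univ v) (mem_univ w) hθ₀ (sub_nonneg.2 hθ₁) (add_sub_cancel θ 1)
  rw [hu₁] at h₁
  rw [hu₂] at h₂
  simp only [smul_eq_mul] at h₁ h₂
  linarith

theorem ConvexOn.map_add_map_le_of_monotone (hφ : ConvexOn ℝ univ φ) (hmono : Monotone φ)
    {u₁ u₂ v₁ v₂ : ℝ} (h₂₁ : u₂ ≤ u₁) (h₁ : u₁ ≤ v₁) (hsum : u₁ + u₂ ≤ v₁ + v₂) :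
    φ u₁ + φ u₂ ≤ φ v₁ + φ v₂ := by
  rcases le_or_gt u₂ v₂ with h₂ | h₂
  · exact add_le_add (hmono h₁) (hmono h₂)
  · calc φ u₁ + φ u₂ ≤ φ v₂ + φ (u₁ + u₂ - v₂) :=
          hφ.map_add_map_le_of_add_eq (by linarith) (by linarith) (by ring)
      _ ≤ φ v₁ + φ v₂ := by linarith [hmono (show u₁ + u₂ - v₂ ≤ v₁ by linarith)]

theorem ConvexOn.comp_add_add_comp_sub (hφ : ConvexOn ℝ univ φ) (hmono : Monotone φ)
    {A S : ℝ → ℝ} (hA : ConvexOn ℝ univ A) (hS : ConvexOn ℝ univ S) (hS₀ : ∀ x, 0 ≤ S x) :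
    ConvexOn ℝ univ fun x => φ (A x + S x) + φ (A x - S x) := by
  refine ⟨convex_univ, fun x _ y _ a b ha hb hab => ?_⟩
  have hAm := hA.2 (mem_univ x) (mem_univ y) ha hb hab
  have hSm := hS.2 (mem_univ x) (mem_univ y) ha hb hab
  have hAdd := hφ.2 (mem_univ (A x + S x)) (mem_univ (A y + S y)) ha hb hab
  have hSub := hφ.2 (mem_univ (A x - S x)) (mem_univ (A y - S y)) ha hb hab
  simp only [smul_eq_mul] at hAm hSm hAdd hSub ⊢
  have hmaj := hφ.map_add_map_le_of_monotone hmono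
    (u₁ := A (a * x + b * y) + S (a * x + b * y)) (u₂ := A (a * x + b * y) - S (a * x + b * y))
    (v₁ := a * (A x + S x) + b * (A y + S y)) (v₂ := a * (A x - S x) + b * (A y - S y))
    (by linarith [hS₀ (a * x + b * y)]) (by linarith) (by linarith)
  linarith

end ConvexPairs

theorem monotone_add_of_abs_sub_le {g : ℝ → ℝ} {K : ℝ} (hK : K ≤ 1)
    (hg : ∀ x y, |g x - g y| ≤ K * |x - y|) : Monotone fun x => x + g x := by
  intro x y hxy
  have hgxy := hg x y
  rw [abs_sub_comm x y, abs_of_nonneg (sub_nonneg.2 hxy)] at hgxy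
  nlinarith [le_abs_self (g x - g y), mul_nonneg (sub_nonneg.2 hK) (sub_nonneg.2 hxy)]

section Integrals

variable {Ω : Type*} [MeasurableSpace Ω] {P : Measure Ω}

theorem monotone_integral {α : Type*} [Preorder α] {f : α → Ω → ℝ}
    (hint : ∀ x, Integrable (f x) P) (hf : ∀ ω, Monotone fun x => f x ω) :
    Monotone fun x => ∫ ω, f x ω ∂P :=
  fun x y hxy => integral_mono (hint x) (hint y) fun ω => hf ω hxy

theorem convexOn_integral {E : Type*} [AddCommMonoid E] [Module ℝ E] {s : Set E}
    {f : E → Ω → ℝ} (hs : Convex ℝ s) (hint : ∀ x ∈ s, Integrable (f x) P)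
    (hf : ∀ ω, ConvexOn ℝ s fun x => f x ω) :
    ConvexOn ℝ s fun x => ∫ ω, f x ω ∂P := by
  refine ⟨hs, fun x hx y hy a b ha hb hab => ?_⟩
  calc ∫ ω, f (a • x + b • y) ω ∂P ≤ ∫ ω, (a * f x ω + b * f y ω) ∂P :=
        integral_mono (hint _ (hs hx hy ha hb hab))
          (((hint x hx).const_mul a).add ((hint y hy).const_mul b))
          fun ω => (hf ω).2 hx hy ha hb hab
    _ = a • ∫ ω, f x ω ∂P + b • ∫ ω, f y ω ∂P := by
        rw [integral_add ((hint x hx).const_mul a) ((hint y hy).const_mul b),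
          integral_const_mul, integral_const_mul]
        rfl

variable [IsFiniteMeasure P] {φ : ℝ → ℝ} {T : Ω → ℝ} {C : ℝ}

theorem Monotone.integrable_comp_add_mul (hφ : Monotone φ) (hT : Measurable T)
    (hTC : ∀ ω, |T ω| ≤ C) (a s : ℝ) : Integrable (fun ω => φ (a + s * T ω)) P := by
  refine Integrable.of_bound ((hφ.measurable.comp (by fun_prop)).aestronglyMeasurable)
    (max |φ (a - |s| * C)| |φ (a + |s| * C)|) (ae_of_all _ fun ω => ?_)
  have hsT : |s * T ω| ≤ |s| * C := by
    rw [abs_mul]; exact mul_le_mul_of_nonneg_left (hTC ω) (abs_nonneg s)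
  obtain ⟨hlo, hhi⟩ := abs_le.1 hsT
  exact abs_le_max_abs_abs (hφ (by linarith)) (hφ (by linarith))

theorem convexOn_integral_comp_add_mul (hφ : ConvexOn ℝ univ φ) (hmono : Monotone φ)
    {A S : ℝ → ℝ} (hA : ConvexOn ℝ univ A) (hS : ConvexOn ℝ univ S) (hS₀ : ∀ x, 0 ≤ S x)
    (hT : Measurable T) (hTC : ∀ ω, |T ω| ≤ C) (hTsymm : IdentDistrib (-T) T P P) :
    ConvexOn ℝ univ fun x => ∫ ω, φ (A x + S x * T ω) ∂P := by
  have hintAdd (x : ℝ) := hmono.integrable_comp_add_mul (P := P) hT hTC (A x) (S x)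
  have hintSub (x : ℝ) : Integrable (fun ω => φ (A x - S x * T ω)) P := by
    simpa [sub_eq_add_neg] using hmono.integrable_comp_add_mul (P := P) hT hTC (A x) (-S x)
  have hsymm (x : ℝ) : ∫ ω, φ (A x - S x * T ω) ∂P = ∫ ω, φ (A x + S x * T ω) ∂P := by
    have hu : Measurable fun t => φ (A x + S x * t) := hmono.measurable.comp (by fun_prop)
    simpa [Function.comp_def, sub_eq_add_neg] using (hTsymm.comp hu).integral_eq
  have hpair : ConvexOn ℝ univ fun x => ∫ ω, (φ (A x + S x * T ω) + φ (A x - S x * T ω)) ∂P := by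
    refine convexOn_integral convex_univ (fun x _ => (hintAdd x).add (hintSub x)) fun ω => ?_
    have hS' : ConvexOn ℝ univ fun x => S x * |T ω| := by
      simpa only [smul_eq_mul, mul_comm] using hS.smul (abs_nonneg (T ω))
    have hsign : (fun x => φ (A x + S x * T ω) + φ (A x - S x * T ω))
        = fun x => φ (A x + S x * |T ω|) + φ (A x - S x * |T ω|) := by
      funext x
      rcases abs_cases (T ω) with ⟨h, -⟩ | ⟨h, -⟩ <;> rw [h]
      rw [mul_neg, sub_neg_eq_add, ← sub_eq_add_neg, add_comm]
    rw [hsign]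
    exact hφ.comp_add_add_comp_sub hmono hA hS' fun x => mul_nonneg (hS₀ x) (abs_nonneg _)
  have hhalf : (fun x => ∫ ω, φ (A x + S x * T ω) ∂P)
      = fun x => (2 : ℝ)⁻¹ • ∫ ω, (φ (A x + S x * T ω) + φ (A x - S x * T ω)) ∂P := by
    funext x
    rw [integral_add (hintAdd x) (hintSub x), hsymm, smul_eq_mul]
    ring
  rw [hhalf]
  exact hpair.smul (by norm_num)

end Integrals

/-- The truncation `Z^h = Z 1_{|Z| ≤ r}` of the noise at level `r`. -/
noncomputable def truncate (r z : ℝ) : ℝ := if |z| ≤ r then z else 0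

theorem truncate_neg (r z : ℝ) : truncate r (-z) = -truncate r z := by
  unfold truncate
  rw [abs_neg]
  split_ifs <;> simp

theorem abs_truncate_le {r : ℝ} (hr : 0 ≤ r) (z : ℝ) : |truncate r z| ≤ r := by
  unfold truncate
  split_ifs with hz
  · exact hz
  · simpa using hr

theorem measurable_truncate (r : ℝ) : Measurable (truncate r) :=
  Measurable.ite (measurableSet_le measurable_abs measurable_const) measurable_id measurable_const

theorem monotone_euler_step {b σ : ℝ → ℝ} {Lb Lσ h t c : ℝ}
    (hbLip : ∀ x y, |b x - b y| ≤ Lb * |x - y|) (hσLip : ∀ x y, |σ x - σ y| ≤ Lσ * |x - y|)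
    (hh : 0 ≤ h) (hhb : 2 * Lb * h < 1) (ht : 2 * Real.sqrt h * Lσ * |t| ≤ 1) :
    Monotone fun x => x + h * b x + Real.sqrt h * σ x * t + c := by
  have hstep := monotone_add_of_abs_sub_le (g := fun x => h * b x + Real.sqrt h * σ x * t + c)
    (K := h * Lb + Real.sqrt h * |t| * Lσ) (by nlinarith) fun x y => ?_
  · intro x y hxy
    linarith [hstep hxy]
  calc |h * b x + Real.sqrt h * σ x * t + c - (h * b y + Real.sqrt h * σ y * t + c)|
      = |h * (b x - b y) + Real.sqrt h * t * (σ x - σ y)| := by ring_nf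
    _ ≤ h * |b x - b y| + Real.sqrt h * |t| * |σ x - σ y| := by
        refine (abs_add_le _ _).trans (le_of_eq ?_)
        rw [abs_mul, abs_mul, abs_mul, abs_of_nonneg hh, abs_of_nonneg (Real.sqrt_nonneg h)]
    _ ≤ h * (Lb * |x - y|) + Real.sqrt h * |t| * (Lσ * |x - y|) := by
        gcongr
        exacts [hbLip x y, hσLip x y]
    _ = (h * Lb + Real.sqrt h * |t| * Lσ) * |x - y| := by ring

theorem truncated_kernel_convex_monotone_general
    {Ω : Type*} [MeasurableSpace Ω] (P : Measure Ω) [IsProbabilityMeasure P]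
    (b σ : ℝ → ℝ)
    (hbconv : ConvexOn ℝ Set.univ b) (hσconv : ConvexOn ℝ Set.univ σ)
    (hσnonneg : ∀ x, 0 ≤ σ x)
    (Lb Lσ : ℝ) (hLσ : 0 < Lσ)
    (hbLip : ∀ x y, |b x - b y| ≤ Lb * |x - y|)
    (hσLip : ∀ x y, |σ x - σ y| ≤ Lσ * |x - y|)
    (h : ℝ) (hh0 : 0 < h) (hhb : 2 * Lb * h < 1)
    (c : ℝ)
    (Z : Ω → ℝ) (hZmeas : Measurable Z) (hZlaw : Measure.map Z P = gaussianReal 0 1)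
    (φ : ℝ → ℝ) (hφmono : Monotone φ) (hφconv : ConvexOn ℝ Set.univ φ) :
    ConvexOn ℝ Set.univ (fun x =>
      ∫ ω, φ (x + h * b x + Real.sqrt h * σ x *
        (if |Z ω| ≤ 1 / (2 * Real.sqrt h * Lσ) then Z ω else 0) + c) ∂P) ∧
    Monotone (fun x =>
      ∫ ω, φ (x + h * b x + Real.sqrt h * σ x *
        (if |Z ω| ≤ 1 / (2 * Real.sqrt h * Lσ) then Z ω else 0) + c) ∂P) := by
  set r := 1 / (2 * Real.sqrt h * Lσ)
  have hr : 0 < r := by positivity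
  have hZsymm : IdentDistrib (-Z) Z P P :=
    HasLaw.identDistrib (by simpa using gaussianReal_neg ⟨hZmeas.aemeasurable, hZlaw⟩)
      ⟨hZmeas.aemeasurable, hZlaw⟩
  have hTsymm : IdentDistrib (fun ω => -truncate r (Z ω)) (fun ω => truncate r (Z ω)) P P := by
    simpa [Function.comp_def, truncate_neg] using hZsymm.comp (measurable_truncate r)
  have hT := (measurable_truncate r).comp hZmeas
  have hTr (ω : Ω) := abs_truncate_le hr.le (Z ω)
  have hφc : ConvexOn ℝ univ fun y => φ (y + c) := by
    simpa [Function.comp_def, add_comm] using hφconv.translate_right c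
  have hφm : Monotone fun y => φ (y + c) := fun y y' hy => hφmono (by linarith)
  have hA : ConvexOn ℝ univ fun x => x + h * b x :=
    (convexOn_id convex_univ).add (hbconv.smul hh0.le)
  have hS : ConvexOn ℝ univ fun x => Real.sqrt h * σ x := hσconv.smul (Real.sqrt_nonneg h)
  have hTsmall (ω : Ω) : 2 * Real.sqrt h * Lσ * |truncate r (Z ω)| ≤ 1 :=
    calc 2 * Real.sqrt h * Lσ * |truncate r (Z ω)| ≤ 2 * Real.sqrt h * Lσ * r := by
          gcongr; exact hTr ω
      _ = 1 := mul_one_div_cancel (by positivity)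
  exact ⟨convexOn_integral_comp_add_mul hφc hφm hA hS
      (fun x => mul_nonneg (Real.sqrt_nonneg h) (hσnonneg x)) hT hTr hTsymm,
    monotone_integral (fun x => hφm.integrable_comp_add_mul hT hTr _ _)
      fun ω => hφmono.comp (monotone_euler_step hbLip hσLip hh0.le hhb (hTsmall ω))⟩

/-- Monotonicity and convexity in `x` of the one-step truncated Euler kernel
`x ↦ E[φ(x + h b(x) + √h σ(x) Z^h + c)]`, where `b, σ` are convex and Lipschitz (with constants
`L_b ≥ 0`, `L_σ > 0`), `σ ≥ 0`, `h ∈ (0, min(1, 1/(2 L_b)))` (the bound being `1` when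
`L_b = 0`), `Z` is standard normal and `Z^h = Z 1_{|Z| ≤ c_{h,σ}}` with
`c_{h,σ} = 1/(2 √h L_σ)`, and `φ` is non-decreasing and convex. -/
theorem truncated_kernel_convex_monotone
    {Ω : Type*} [MeasurableSpace Ω] (P : Measure Ω) [IsProbabilityMeasure P]
    (b σ : ℝ → ℝ)
    (hbconv : ConvexOn ℝ Set.univ b) (hσconv : ConvexOn ℝ Set.univ σ)
    (hσnonneg : ∀ x, 0 ≤ σ x)
    (Lb Lσ : ℝ) (hLb : 0 ≤ Lb) (hLσ : 0 < Lσ)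
    (hbLip : ∀ x y, |b x - b y| ≤ Lb * |x - y|)
    (hσLip : ∀ x y, |σ x - σ y| ≤ Lσ * |x - y|)
    (h : ℝ) (hh0 : 0 < h) (hh1 : h < 1) (hhb : 2 * Lb * h < 1)
    (c : ℝ)
    (Z : Ω → ℝ) (hZmeas : Measurable Z) (hZlaw : Measure.map Z P = gaussianReal 0 1)
    (φ : ℝ → ℝ) (hφmono : Monotone φ) (hφconv : ConvexOn ℝ Set.univ φ) :
    ConvexOn ℝ Set.univ (fun x =>
      ∫ ω, φ (x + h * b x + Real.sqrt h * σ x *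
        (if |Z ω| ≤ 1 / (2 * Real.sqrt h * Lσ) then Z ω else 0) + c) ∂P) ∧
    Monotone (fun x =>
      ∫ ω, φ (x + h * b x + Real.sqrt h * σ x *
        (if |Z ω| ≤ 1 / (2 * Real.sqrt h * Lσ) then Z ω else 0) + c) ∂P) :=
  truncated_kernel_convex_monotone_general P b σ hbconv hσconv hσnonneg Lb Lσ hLσ hbLip hσLip h hh0
    hhb c Z hZmeas hZlaw φ hφmono hφconv
end
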